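/- arXiv:2402.12771 — 3 statements merged into one kernel-verified Lean document; each statement's English description precedes it below -/
import Mathlib

section
/- The function g(m) := (1-m)·K(m)² − E(m)² is strictly negative for all m ∈ (0,1), where K and E are the complete elliptic integrals of the first and second kind. -/
open Real

noncomputable def ellK (m : ℝ) : ℝ :=
  ∫ θ in (0:ℝ)..(π / 2), 1 / Real.sqrt (1 - m * Real.sin θ ^ 2)

noncomputable def ellE (m : ℝ) : ℝ :=
  ∫ θ in (0:ℝ)..(π / 2), Real.sqrt (1 - m * Real.sin θ ^ 2)

theorem g_neg (m : ℝ) (hm : m ∈ Set.Ioo (0:ℝ) 1) :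
    (1 - m) * ellK m ^ 2 - ellE m ^ 2 < 0 := by
  obtain ⟨hm0, hm1⟩ := hm
  have h1m : (0:ℝ) < 1 - m := by linarith
  set k := Real.sqrt (1 - m) with hk
  have hposS : ∀ θ : ℝ, 0 < 1 - m * Real.sin θ ^ 2 := by
    intro θ
    nlinarith [Real.sin_sq_le_one θ, sq_nonneg (Real.sin θ)]
  have hposC : ∀ θ : ℝ, 0 < 1 - m * Real.cos θ ^ 2 := by
    intro θ
    nlinarith [Real.cos_sq_le_one θ, sq_nonneg (Real.cos θ)]
  have hFpos : ∀ θ : ℝ, 0 < Real.sqrt (1 - m * Real.sin θ ^ 2) :=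
    fun θ => Real.sqrt_pos.mpr (hposS θ)
  have hF'pos : ∀ θ : ℝ, 0 < Real.sqrt (1 - m * Real.cos θ ^ 2) :=
    fun θ => Real.sqrt_pos.mpr (hposC θ)
  -- continuity
  have hcontF : Continuous fun θ : ℝ => Real.sqrt (1 - m * Real.sin θ ^ 2) := by
    fun_prop
  have hcontF' : Continuous fun θ : ℝ => Real.sqrt (1 - m * Real.cos θ ^ 2) := by
    fun_prop
  have hcontG : Continuous fun θ : ℝ => 1 / Real.sqrt (1 - m * Real.sin θ ^ 2) :=
    continuous_const.div hcontF fun θ => (hFpos θ).ne'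
  have hcontG' : Continuous fun θ : ℝ => 1 / Real.sqrt (1 - m * Real.cos θ ^ 2) :=
    continuous_const.div hcontF' fun θ => (hF'pos θ).ne'
  have hIF : IntervalIntegrable (fun θ => Real.sqrt (1 - m * Real.sin θ ^ 2))
      MeasureTheory.volume 0 (π / 2) := hcontF.intervalIntegrable _ _
  have hIF' : IntervalIntegrable (fun θ => Real.sqrt (1 - m * Real.cos θ ^ 2))
      MeasureTheory.volume 0 (π / 2) := hcontF'.intervalIntegrable _ _
  have hIG : IntervalIntegrable (fun θ => 1 / Real.sqrt (1 - m * Real.sin θ ^ 2))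
      MeasureTheory.volume 0 (π / 2) := hcontG.intervalIntegrable _ _
  have hIG' : IntervalIntegrable (fun θ => 1 / Real.sqrt (1 - m * Real.cos θ ^ 2))
      MeasureTheory.volume 0 (π / 2) := hcontG'.intervalIntegrable _ _
  -- reflection θ ↦ π/2 - θ
  have hrefl : ∀ f : ℝ → ℝ,
      (∫ θ in (0:ℝ)..(π / 2), f (π / 2 - θ)) = ∫ θ in (0:ℝ)..(π / 2), f θ := by
    intro f
    rw [intervalIntegral.integral_comp_sub_left f (π / 2)]
    norm_num
  have hE' : ellE m = ∫ θ in (0:ℝ)..(π / 2), Real.sqrt (1 - m * Real.cos θ ^ 2) := by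
    rw [ellE, ← hrefl fun θ => Real.sqrt (1 - m * Real.sin θ ^ 2)]
    simp [Real.sin_pi_div_two_sub]
  have hK' : ellK m = ∫ θ in (0:ℝ)..(π / 2), 1 / Real.sqrt (1 - m * Real.cos θ ^ 2) := by
    rw [ellK, ← hrefl fun θ => 1 / Real.sqrt (1 - m * Real.sin θ ^ 2)]
    simp [Real.sin_pi_div_two_sub]
  -- key strict integral positivity
  have hmain : 0 < ∫ θ in (0:ℝ)..(π / 2),
      (Real.sqrt (1 - m * Real.sin θ ^ 2) + Real.sqrt (1 - m * Real.cos θ ^ 2)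
        - k * (1 / Real.sqrt (1 - m * Real.sin θ ^ 2)
              + 1 / Real.sqrt (1 - m * Real.cos θ ^ 2))) := by
    apply intervalIntegral.intervalIntegral_pos_of_pos_on
    · exact (hIF.add hIF').sub ((hIG.add hIG').const_mul k)
    · intro θ hθ
      have hs : 0 < Real.sin θ := Real.sin_pos_of_pos_of_lt_pi hθ.1 (by linarith [pi_pos, hθ.2])
      have hc : 0 < Real.cos θ := Real.cos_pos_of_mem_Ioo ⟨by linarith [pi_pos, hθ.1], hθ.2⟩
      set a := Real.sqrt (1 - m * Real.sin θ ^ 2) with ha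
      set b := Real.sqrt (1 - m * Real.cos θ ^ 2) with hb
      have ha0 : 0 < a := hFpos θ
      have hb0 : 0 < b := hF'pos θ
      have hsc : Real.sin θ ^ 2 + Real.cos θ ^ 2 = 1 := Real.sin_sq_add_cos_sq θ
      have hAB : 1 - m < (1 - m * Real.sin θ ^ 2) * (1 - m * Real.cos θ ^ 2) := by
        nlinarith [mul_pos (mul_pos hm0 hs) hc]
      have hP : k < a * b := by
        rw [ha, hb, ← Real.sqrt_mul (hposS θ).le]
        exact Real.sqrt_lt_sqrt h1m.le hAB
      have hlt : k * (1 / a + 1 / b) < a + b := by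
        have h : 1 / a + 1 / b = (a + b) / (a * b) := by
          field_simp; ring
        rw [h, mul_div_assoc', div_lt_iff₀ (mul_pos ha0 hb0)]
        nlinarith [Real.sqrt_nonneg (1 - m)]
      linarith
    · linarith [pi_pos]
  -- rewrite the integral as 2E - k*(2K)
  have hsplit : (∫ θ in (0:ℝ)..(π / 2),
      (Real.sqrt (1 - m * Real.sin θ ^ 2) + Real.sqrt (1 - m * Real.cos θ ^ 2)
        - k * (1 / Real.sqrt (1 - m * Real.sin θ ^ 2)
              + 1 / Real.sqrt (1 - m * Real.cos θ ^ 2))))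
      = (ellE m + ellE m) - k * (ellK m + ellK m) := by
    rw [intervalIntegral.integral_sub (hIF.add hIF') ((hIG.add hIG').const_mul k),
      intervalIntegral.integral_add hIF hIF',
      intervalIntegral.integral_const_mul,
      intervalIntegral.integral_add hIG hIG', ← hE', ← hK', ellE, ellK]
  rw [hsplit] at hmain
  have hKE : k * ellK m < ellE m := by linarith
  have hK0 : 0 ≤ ellK m := by
    apply intervalIntegral.integral_nonneg (by linarith [pi_pos])
    intro θ _
    positivity
  have hkK0 : 0 ≤ k * ellK m := mul_nonneg (Real.sqrt_nonneg _) hK0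
  have hsq : (k * ellK m) ^ 2 < ellE m ^ 2 := by nlinarith
  have hk2 : k ^ 2 = 1 - m := Real.sq_sqrt h1m.le
  nlinarith [hsq, hk2]
end

section
/- The function f(m) := 2E(m)/(m·K(m)) + 1 − 2/m is strictly decreasing on (0,1), where K and E are the complete elliptic integrals of the first and second kind. -/
open Real

/-!
With `D(m) = ∫ sin²θ / √(1 - m sin²θ) dθ` one has `E = K - m D`, so `f(m) = 1 - 2 D(m) / K(m)`,
and `D / K` is the mean of `sin²θ` against the weight `(1 - m sin²θ)^(-1/2)`. For `a < b` the
ratio of the weights for `b` and `a` increases with `sin²θ`, so this mean increases with `m`.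
Quantitatively: the double integral of `(s x - s y) (q x p y - p x q y)` equals
`2 (∫ s q ∫ p - ∫ s p ∫ q)`, and its integrand is nonnegative when `q / p` increases with `s`.
-/

open Set MeasureTheory

section Crossed

variable {s p q : ℝ → ℝ} {a b : ℝ}

theorem integral_crossed_eq {μ : Measure ℝ} (hp : IntervalIntegrable p μ a b)
    (hq : IntervalIntegrable q μ a b) (hsp : IntervalIntegrable (fun y => s y * p y) μ a b)
    (hsq : IntervalIntegrable (fun y => s y * q y) μ a b) (x : ℝ) :
    ∫ y in a..b, (s x - s y) * (q x * p y - p x * q y) ∂μ =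
      s x * q x * (∫ y in a..b, p y ∂μ) - s x * p x * (∫ y in a..b, q y ∂μ)
        - q x * (∫ y in a..b, s y * p y ∂μ) + p x * (∫ y in a..b, s y * q y ∂μ) := by
  calc ∫ y in a..b, (s x - s y) * (q x * p y - p x * q y) ∂μ
      = ∫ y in a..b, (s x * q x * p y - s x * p x * q y - q x * (s y * p y)
          + p x * (s y * q y)) ∂μ := by congr 1 with y; ring
    _ = _ := by
      rw [intervalIntegral.integral_add (((hp.const_mul _).sub (hq.const_mul _)).sub
          (hsp.const_mul _)) (hsq.const_mul _),
        intervalIntegral.integral_sub ((hp.const_mul _).sub (hq.const_mul _)) (hsp.const_mul _),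
        intervalIntegral.integral_sub (hp.const_mul _) (hq.const_mul _)]
      simp only [intervalIntegral.integral_const_mul]

theorem integral_mul_integral_lt_of_crossed (hab : a < b) (hs : ContinuousOn s (Icc a b))
    (hp : ContinuousOn p (Icc a b)) (hq : ContinuousOn q (Icc a b))
    (hcross : ∀ x ∈ Icc a b, ∀ y ∈ Icc a b, 0 ≤ (s x - s y) * (q x * p y - p x * q y))
    (hstrict : ∃ x ∈ Icc a b, ∃ y ∈ Icc a b, 0 < (s x - s y) * (q x * p y - p x * q y)) :
    (∫ x in a..b, s x * p x) * (∫ x in a..b, q x) <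
      (∫ x in a..b, s x * q x) * (∫ x in a..b, p x) := by
  set P := ∫ x in a..b, p x
  set Q := ∫ x in a..b, q x
  set SP := ∫ x in a..b, s x * p x
  set SQ := ∫ x in a..b, s x * q x
  have hpi : IntervalIntegrable p volume a b := hp.intervalIntegrable_of_Icc hab.le
  have hqi : IntervalIntegrable q volume a b := hq.intervalIntegrable_of_Icc hab.le
  have hspi : IntervalIntegrable (fun x => s x * p x) volume a b :=
    (hs.mul hp).intervalIntegrable_of_Icc hab.le
  have hsqi : IntervalIntegrable (fun x => s x * q x) volume a b :=
    (hs.mul hq).intervalIntegrable_of_Icc hab.le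
  have hinner := integral_crossed_eq hpi hqi hspi hsqi
  have hpos : 0 < ∫ x in a..b, (s x * q x * P - s x * p x * Q - q x * SP + p x * SQ) := by
    obtain ⟨x₀, hx₀, y₀, hy₀, h₀⟩ := hstrict
    refine intervalIntegral.integral_pos hab (by fun_prop) (fun x hx => ?_) ⟨x₀, hx₀, ?_⟩
    · rw [← hinner]
      exact intervalIntegral.integral_nonneg hab.le
        fun y hy => hcross x (Ioc_subset_Icc_self hx) y hy
    · rw [← hinner]
      exact intervalIntegral.integral_pos hab (by fun_prop)
        (fun y hy => hcross x₀ hx₀ y (Ioc_subset_Icc_self hy)) ⟨y₀, hy₀, h₀⟩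
  have htotal : ∫ x in a..b, (s x * q x * P - s x * p x * Q - q x * SP + p x * SQ) =
      2 * (SQ * P - SP * Q) := by
    rw [intervalIntegral.integral_add (((hsqi.mul_const _).sub (hspi.mul_const _)).sub
        (hqi.mul_const _)) (hpi.mul_const _),
      intervalIntegral.integral_sub ((hsqi.mul_const _).sub (hspi.mul_const _)) (hqi.mul_const _),
      intervalIntegral.integral_sub (hsqi.mul_const _) (hspi.mul_const _)]
    simp only [intervalIntegral.integral_mul_const]
    ring
  linarith

end Crossed

noncomputable def ellKIntegrand (m θ : ℝ) : ℝ := 1 / √(1 - m * sin θ ^ 2)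

noncomputable def ellD (m : ℝ) : ℝ :=
  ∫ θ in (0:ℝ)..(π / 2), sin θ ^ 2 * ellKIntegrand m θ

lemma ellK_eq_integral_ellKIntegrand (m : ℝ) :
    ellK m = ∫ θ in (0:ℝ)..(π / 2), ellKIntegrand m θ := rfl

section EllipticIntegrals

variable {m : ℝ}

lemma one_sub_mul_sin_sq_pos (hm : m < 1) (θ : ℝ) : 0 < 1 - m * sin θ ^ 2 := by
  rcases le_or_gt m 0 with h | h
  · nlinarith [sq_nonneg (sin θ)]
  · nlinarith [sin_sq_le_one θ]

lemma ellKIntegrand_pos (hm : m < 1) (θ : ℝ) : 0 < ellKIntegrand m θ :=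
  one_div_pos.2 (sqrt_pos.2 (one_sub_mul_sin_sq_pos hm θ))

lemma continuous_ellKIntegrand (hm : m < 1) : Continuous (ellKIntegrand m) :=
  continuous_const.div (by fun_prop) fun θ => (sqrt_pos.2 (one_sub_mul_sin_sq_pos hm θ)).ne'

lemma ellK_pos (hm : m < 1) : 0 < ellK m :=
  intervalIntegral.intervalIntegral_pos_of_pos_on
    ((continuous_ellKIntegrand hm).intervalIntegrable _ _)
    (fun θ _ => ellKIntegrand_pos hm θ) (by positivity)

lemma ellE_eq_ellK_sub_mul_ellD (hm : m < 1) : ellE m = ellK m - m * ellD m := by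
  have hK := continuous_ellKIntegrand hm
  rw [ellK_eq_integral_ellKIntegrand, ellD, ← intervalIntegral.integral_const_mul,
    ← intervalIntegral.integral_sub (hK.intervalIntegrable _ _)
      (Continuous.intervalIntegrable (by fun_prop) _ _)]
  refine intervalIntegral.integral_congr fun θ _ => ?_
  have h := one_sub_mul_sin_sq_pos hm θ
  have hs : √(1 - m * sin θ ^ 2) ≠ 0 := (sqrt_pos.2 h).ne'
  simp only [ellKIntegrand]
  field_simp
  rw [sq_sqrt h.le]

lemma ellKIntegrand_mul_lt {a b θ φ : ℝ} (hab : a < b) (hb : b < 1)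
    (hφθ : sin φ ^ 2 < sin θ ^ 2) :
    ellKIntegrand a θ * ellKIntegrand b φ < ellKIntegrand b θ * ellKIntegrand a φ := by
  have ha : a < 1 := hab.trans hb
  have haθ := one_sub_mul_sin_sq_pos ha θ
  have hbθ := one_sub_mul_sin_sq_pos hb θ
  have haφ := one_sub_mul_sin_sq_pos ha φ
  have hbφ := one_sub_mul_sin_sq_pos hb φ
  simp only [ellKIntegrand, one_div_mul_one_div, ← sqrt_mul haθ.le, ← sqrt_mul hbθ.le]
  refine one_div_lt_one_div_of_lt (sqrt_pos.2 (by positivity)) (sqrt_lt_sqrt (by positivity) ?_)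
  nlinarith

lemma ellKIntegrand_crossed_nonneg {a b : ℝ} (hab : a < b) (hb : b < 1) (θ φ : ℝ) :
    0 ≤ (sin θ ^ 2 - sin φ ^ 2) *
      (ellKIntegrand b θ * ellKIntegrand a φ - ellKIntegrand a θ * ellKIntegrand b φ) := by
  rcases lt_trichotomy (sin φ ^ 2) (sin θ ^ 2) with h | h | h
  · exact mul_nonneg (by linarith) (by linarith [ellKIntegrand_mul_lt hab hb h])
  · simp [h]
  · exact mul_nonneg_of_nonpos_of_nonpos (by linarith)
      (by linarith [ellKIntegrand_mul_lt hab hb h])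

lemma ellD_mul_ellK_lt {a b : ℝ} (hab : a < b) (hb : b < 1) :
    ellD a * ellK b < ellD b * ellK a := by
  have ha : a < 1 := hab.trans hb
  rw [ellK_eq_integral_ellKIntegrand, ellK_eq_integral_ellKIntegrand]
  refine integral_mul_integral_lt_of_crossed (by positivity) (by fun_prop)
    (continuous_ellKIntegrand ha).continuousOn (continuous_ellKIntegrand hb).continuousOn
    (fun θ _ φ _ => ellKIntegrand_crossed_nonneg hab hb θ φ)
    ⟨π / 2, right_mem_Icc.2 (by positivity), 0, left_mem_Icc.2 (by positivity), ?_⟩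
  rw [sin_pi_div_two, sin_zero, one_pow, zero_pow two_ne_zero, sub_zero, one_mul, sub_pos]
  exact ellKIntegrand_mul_lt hab hb (by simp)

lemma ellD_div_ellK_strictMonoOn : StrictMonoOn (fun m => ellD m / ellK m) (Iio 1) :=
  fun _ ha _ hb hab =>
    (div_lt_div_iff₀ (ellK_pos ha) (ellK_pos hb)).2 (ellD_mul_ellK_lt hab hb)

end EllipticIntegrals

theorem f_strictAnti :
    StrictAntiOn (fun m => 2 * ellE m / (m * ellK m) + 1 - 2 / m)
      (Set.Ioo (0:ℝ) 1) := by
  have hf : ∀ m ∈ Ioo (0:ℝ) 1,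
      2 * ellE m / (m * ellK m) + 1 - 2 / m = 1 - 2 * (ellD m / ellK m) := by
    intro m hm
    have := (ellK_pos hm.2).ne'
    have := hm.1.ne'
    rw [ellE_eq_ellK_sub_mul_ellD hm.2]
    field_simp
    ring
  intro a ha b hb hab
  have := ellD_div_ellK_strictMonoOn (Ioo_subset_Iio_self ha) (Ioo_subset_Iio_self hb) hab
  simp only [hf a ha, hf b hb]
  linarith
end

section
/- The function f(m) := (2E(m) + (m−2)K(m))·√(4−2m)/m is strictly decreasing on (0,1) and maps (0,1) bijectively onto (−∞, 0). -/
/-!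
Folding `[0, π/2]` onto `[0, π/4]` by `θ ↦ π/2 - θ` writes `f m` as
`∫₀^{π/4} cos 2θ · g(m, sin²θ)` (`orbitIntegral m`), where `g = ellGap` is
`g(m, p) = √(4 - 2m) ((1 - mp)^{-1/2} - (1 - m(1 - p))^{-1/2})`. With `a = √(1 - mp)` and
`b = √(1 - m(1 - p))` one computes `∂g/∂m = -(1 - 2p)(a³ + b³) / (√(4 - 2m) a³ b³)`, which is
negative for `p < 1/2`; since `g(0, p) = 0`, the integral, which makes sense for every `m < 1`, is
continuous, strictly decreasing and vanishes at `m = 0`. Near `θ = 0` the integrand is at most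
`2 - 1/(√(1 - m) + θ)`, so the integral is bounded by `C + log √(1 - m) → -∞` as `m → 1`, and the
intermediate value theorem gives every negative value.
-/

open Real

open Set Filter Topology MeasureTheory intervalIntegral

theorem intervalIntegral.integral_eq_integral_add_reflect {E : Type*} [NormedAddCommGroup E]
    [NormedSpace ℝ E] {f : ℝ → E} {c : ℝ} (hf : IntervalIntegrable f volume 0 (2 * c)) :
    ∫ x in (0 : ℝ)..2 * c, f x = ∫ x in (0 : ℝ)..c, (f x + f (2 * c - x)) := by
  have hc : c ∈ uIcc 0 (2 * c) := by
    rcases le_total 0 c with h | h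
    · exact Icc_subset_uIcc ⟨h, by linarith⟩
    · exact Icc_subset_uIcc' ⟨by linarith, h⟩
  have h₁ : IntervalIntegrable f volume 0 c := hf.mono_set (uIcc_subset_uIcc left_mem_uIcc hc)
  have h₂ : IntervalIntegrable f volume c (2 * c) :=
    hf.mono_set (uIcc_subset_uIcc hc right_mem_uIcc)
  have h₂' : IntervalIntegrable (fun x => f (2 * c - x)) volume 0 c := by
    simpa [two_mul] using (h₂.comp_sub_left (2 * c)).symm
  rw [integral_add h₁ h₂', integral_comp_sub_left, ← integral_add_adjacent_intervals h₁ h₂]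
  congr 2 <;> ring

theorem ContinuousOn.surjOn_Ioo_Iio_of_tendsto_atBot {F : ℝ → ℝ} {a b : ℝ} (hab : a < b)
    (hF : ContinuousOn F (Ico a b)) (hb : Tendsto F (𝓝[<] b) atBot) :
    SurjOn F (Ioo a b) (Iio (F a)) := by
  intro y hy
  obtain ⟨v, hFv, hv⟩ :=
    ((hb.eventually (eventually_lt_atBot y)).and (Ioo_mem_nhdsLT hab)).exists
  obtain ⟨m, hm, rfl⟩ := intermediate_value_Icc' hv.1.le (hF.mono (Icc_subset_Ico_right hv.2))
    ⟨hFv.le, le_of_lt hy⟩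
  have ham : a ≠ m := by rintro rfl; exact lt_irrefl _ (mem_Iio.1 hy)
  exact ⟨m, ⟨hm.1.lt_of_ne ham, hm.2.trans_lt hv.2⟩, rfl⟩

lemma sin_sq_le_half_of_cos_two_mul_nonneg {θ : ℝ} (h : 0 ≤ cos (2 * θ)) : sin θ ^ 2 ≤ 1 / 2 := by
  rw [sin_sq_eq_half_sub]; linarith

lemma one_sub_mul_pos {m p : ℝ} (hm : m < 1) (hp0 : 0 ≤ p) (hp1 : p ≤ 1) : 0 < 1 - m * p := by
  nlinarith [mul_nonneg hp0 (sub_nonneg.2 hm.le),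
    mul_nonneg (sub_nonneg.2 hp1) (sub_nonneg.2 hm.le)]

lemma two_mul_ellE_add_sub_two_mul_ellK {m : ℝ} (hm : m < 1) :
    2 * ellE m + (m - 2) * ellK m =
      m * ∫ θ in (0 : ℝ)..π / 2, cos (2 * θ) / √(1 - m * sin θ ^ 2) := by
  have hpos θ : 0 < 1 - m * sin θ ^ 2 := one_sub_mul_pos hm (sq_nonneg _) (sin_sq_le_one θ)
  have hcont : Continuous fun θ => √(1 - m * sin θ ^ 2) := by fun_prop
  have hcont' : Continuous fun θ => 1 / √(1 - m * sin θ ^ 2) :=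
    continuous_const.div hcont fun θ => (sqrt_pos.2 (hpos θ)).ne'
  rw [ellE, ellK, ← intervalIntegral.integral_const_mul, ← intervalIntegral.integral_const_mul,
    ← integral_add ((hcont.intervalIntegrable _ _).const_mul 2)
      ((hcont'.intervalIntegrable _ _).const_mul _), ← intervalIntegral.integral_const_mul]
  refine integral_congr fun θ _ => ?_
  have hsq := mul_self_sqrt (hpos θ).le
  have hs := (sqrt_pos.2 (hpos θ)).ne'
  rw [cos_two_mul, cos_sq']
  field_simp
  linear_combination 2 * hsq

noncomputable def ellGap (m p : ℝ) : ℝ :=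
  √(4 - 2 * m) * ((√(1 - m * p))⁻¹ - (√(1 - m * (1 - p)))⁻¹)

noncomputable def orbitIntegral (m : ℝ) : ℝ :=
  ∫ θ in (0 : ℝ)..π / 4, cos (2 * θ) * ellGap m (sin θ ^ 2)

lemma continuousOn_ellGap : ContinuousOn (Function.uncurry ellGap) (Iio 1 ×ˢ Icc 0 1) := by
  rintro ⟨m, p⟩ ⟨hm, hp0, hp1⟩
  have h₁ := one_sub_mul_pos (p := p) hm hp0 hp1
  have h₂ := one_sub_mul_pos (p := 1 - p) hm (by linarith) (by linarith)
  refine ContinuousAt.continuousWithinAt ?_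
  simp only [Function.uncurry_def, ellGap]
  fun_prop (disch := exact (sqrt_pos.2 (by assumption)).ne')

lemma continuous_cos_two_mul_mul_ellGap {m : ℝ} (hm : m < 1) :
    Continuous fun θ => cos (2 * θ) * ellGap m (sin θ ^ 2) := by
  refine (by fun_prop : Continuous fun θ : ℝ => cos (2 * θ)).mul
    (continuousOn_ellGap.comp_continuous (f := fun θ => (m, sin θ ^ 2)) (by fun_prop)
      fun θ => ⟨hm, sq_nonneg _, sin_sq_le_one θ⟩)

lemma orbitIntegral_eq {m : ℝ} (hm0 : m ≠ 0) (hm1 : m < 1) :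
    (2 * ellE m + (m - 2) * ellK m) * √(4 - 2 * m) / m = orbitIntegral m := by
  have hcont : Continuous fun θ => cos (2 * θ) / √(1 - m * sin θ ^ 2) :=
    (by fun_prop : Continuous fun θ : ℝ => cos (2 * θ)).div (by fun_prop) fun θ =>
      (sqrt_pos.2 (one_sub_mul_pos hm1 (sq_nonneg _) (sin_sq_le_one θ))).ne'
  rw [two_mul_ellE_add_sub_two_mul_ellK hm1, show π / 2 = 2 * (π / 4) by ring,
    integral_eq_integral_add_reflect (hcont.intervalIntegrable _ _), orbitIntegral,
    mul_assoc, mul_div_cancel_left₀ _ hm0, ← intervalIntegral.integral_mul_const]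
  refine integral_congr fun θ _ => ?_
  rw [show 2 * (2 * (π / 4) - θ) = π - 2 * θ by ring, cos_pi_sub,
    show 2 * (π / 4) - θ = π / 2 - θ by ring, sin_pi_div_two_sub, cos_sq', ellGap]
  ring

lemma hasDerivAt_ellGap {p x : ℝ} (hp0 : 0 ≤ p) (hp1 : p ≤ 1) (hx : x < 1) :
    HasDerivAt (fun m => ellGap m p)
      (-((1 - 2 * p) * (√(1 - x * p) ^ 3 + √(1 - x * (1 - p)) ^ 3)) /
        (√(4 - 2 * x) * (√(1 - x * p) ^ 3 * √(1 - x * (1 - p)) ^ 3))) x := by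
  have hA := one_sub_mul_pos hx hp0 hp1
  have hB := one_sub_mul_pos (p := 1 - p) hx (by linarith) (by linarith)
  have hS : 0 < 4 - 2 * x := by linarith
  have hd (c : ℝ) : HasDerivAt (fun m => 1 - m * c) (-c) x := by
    simpa using ((hasDerivAt_id x).mul_const c).const_sub 1
  have hdS : HasDerivAt (fun m => 4 - 2 * m) (-2) x := by
    simpa using ((hasDerivAt_id x).const_mul 2).const_sub 4
  have hsA := (sqrt_pos.2 hA).ne'
  have hsB := (sqrt_pos.2 hB).ne'
  have hsS := (sqrt_pos.2 hS).ne'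
  refine HasDerivAt.congr_deriv ((hdS.sqrt hS.ne').mul
    ((((hd p).sqrt hA.ne').inv hsA).sub (((hd (1 - p)).sqrt hB.ne').inv hsB))) ?_
  have ha2 : √(1 - x * p) ^ 2 = 1 - x * p := sq_sqrt hA.le
  have hb2 : √(1 - x * (1 - p)) ^ 2 = 1 - x * (1 - p) := sq_sqrt hB.le
  have hs2 : √(4 - 2 * x) ^ 2 = 4 - 2 * x := sq_sqrt hS.le
  field_simp
  linear_combination (p * √(1 - x * (1 - p)) ^ 3 - (1 - p) * √(1 - x * p) ^ 3) * hs2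
    - 2 * √(1 - x * (1 - p)) ^ 3 * ha2 + 2 * √(1 - x * p) ^ 3 * hb2

lemma strictAntiOn_ellGap {p : ℝ} (hp0 : 0 ≤ p) (hp : p < 1 / 2) :
    StrictAntiOn (fun m => ellGap m p) (Iio 1) := by
  have hderiv {x : ℝ} (hx : x < 1) := hasDerivAt_ellGap hp0 (by linarith) hx
  refine strictAntiOn_of_hasDerivWithinAt_neg (convex_Iio 1)
    (fun x hx => (hderiv hx).continuousAt.continuousWithinAt)
    (fun x hx => (hderiv (mem_Iio.1 (interior_subset hx))).hasDerivWithinAt) fun x hx => ?_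
  have hx : x < 1 := mem_Iio.1 (interior_subset hx)
  have hA := one_sub_mul_pos hx hp0 (by linarith)
  have hB := one_sub_mul_pos (p := 1 - p) hx (by linarith) (by linarith)
  have hS : 0 < 4 - 2 * x := by linarith
  have : 0 < 1 - 2 * p := by linarith
  exact div_neg_of_neg_of_pos (neg_neg_of_pos (by positivity)) (by positivity)

@[simp]
lemma ellGap_zero_left (p : ℝ) : ellGap 0 p = 0 := by
  simp [ellGap]

lemma ellGap_nonpos {m p : ℝ} (hm0 : 0 ≤ m) (hm1 : m < 1) (hp0 : 0 ≤ p) (hp : p ≤ 1 / 2) :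
    ellGap m p ≤ 0 := by
  rcases hp.lt_or_eq with hlt | rfl
  · simpa using (strictAntiOn_ellGap hp0 hlt).antitoneOn (show (0 : ℝ) ∈ Iio 1 by norm_num) hm1 hm0
  · norm_num [ellGap]

lemma strictAntiOn_orbitIntegral : StrictAntiOn orbitIntegral (Iio 1) := by
  intro m₁ hm₁ m₂ hm₂ hlt
  rw [← sub_pos, orbitIntegral, orbitIntegral, ← integral_sub
    ((continuous_cos_two_mul_mul_ellGap hm₁).intervalIntegrable _ _)
    ((continuous_cos_two_mul_mul_ellGap hm₂).intervalIntegrable _ _)]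
  refine intervalIntegral_pos_of_pos_on
    (((continuous_cos_two_mul_mul_ellGap hm₁).sub
      (continuous_cos_two_mul_mul_ellGap hm₂)).intervalIntegrable _ _)
    (fun θ hθ => ?_) (by positivity)
  have hcos : 0 < cos (2 * θ) := cos_pos_of_mem_Ioo ⟨by linarith [hθ.1, pi_pos], by linarith [hθ.2]⟩
  have hp : sin θ ^ 2 < 1 / 2 := by rw [sin_sq_eq_half_sub]; linarith
  rw [← mul_sub]
  exact mul_pos hcos (sub_pos.2 (strictAntiOn_ellGap (sq_nonneg _) hp hm₁ hm₂ hlt))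

@[simp]
lemma orbitIntegral_zero : orbitIntegral 0 = 0 := by
  simp [orbitIntegral]

lemma continuousOn_orbitIntegral : ContinuousOn orbitIntegral (Iio 1) := by
  intro m hm
  obtain ⟨v, hmv, hv⟩ := exists_between (mem_Iio.1 hm)
  -- capping the parameter at `v < 1` keeps the integrand jointly continuous everywhere
  have hcap : Continuous fun x => orbitIntegral (min x v) :=
    continuous_parametric_intervalIntegral_of_continuous' ((by fun_prop : Continuous
      fun z : ℝ × ℝ => cos (2 * z.2)).mul (continuousOn_ellGap.comp_continuous
        (f := fun z : ℝ × ℝ => (min z.1 v, sin z.2 ^ 2)) (by fun_prop)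
        fun z => ⟨min_le_right _ _ |>.trans_lt hv, sq_nonneg _, sin_sq_le_one _⟩)) _ _
  have heq : (fun x => orbitIntegral (min x v)) =ᶠ[𝓝 m] orbitIntegral := by
    filter_upwards [Iio_mem_nhds hmv] with x hx using by rw [min_eq_left (le_of_lt hx)]
  exact (hcap.continuousAt.congr heq).continuousWithinAt

lemma cos_two_mul_mul_ellGap_le {m θ : ℝ} (hm0 : 0 ≤ m) (hm1 : m < 1) (hθ0 : 0 ≤ θ)
    (hθ : θ ≤ π / 8) : cos (2 * θ) * ellGap m (sin θ ^ 2) ≤ 2 - (√(1 - m) + θ)⁻¹ := by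
  have hcos : √2 / 2 ≤ cos (2 * θ) := by
    rw [← cos_pi_div_four]
    exact cos_le_cos_of_nonneg_of_le_pi (by linarith) (by linarith [pi_pos]) (by linarith)
  have hp : sin θ ^ 2 ≤ 1 / 2 :=
    sin_sq_le_half_of_cos_two_mul_nonneg ((div_nonneg (sqrt_nonneg 2) two_pos.le).trans hcos)
  have hsin : sin θ ^ 2 ≤ θ ^ 2 := pow_le_pow_left₀ (sin_nonneg_of_nonneg_of_le_pi hθ0
    (by linarith [pi_pos])) (sin_le hθ0) 2
  have hs : √2 ≤ √(4 - 2 * m) := sqrt_le_sqrt (by linarith)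
  have hcs : 1 ≤ cos (2 * θ) * √(4 - 2 * m) := by
    nlinarith [mul_self_sqrt (show (0 : ℝ) ≤ 2 by norm_num), sqrt_nonneg 2]
  have hgap : (√(1 - m * sin θ ^ 2))⁻¹ - (√(1 - m * (1 - sin θ ^ 2)))⁻¹ ≤ 0 := by
    have := ellGap_nonpos hm0 hm1 (sq_nonneg _) hp
    rw [ellGap] at this
    nlinarith [sqrt_pos.2 (show 0 < 4 - 2 * m by linarith)]
  have ha : (√(1 - m * sin θ ^ 2))⁻¹ ≤ 2 := inv_le_of_inv_le₀ two_pos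
    ((le_sqrt' (by norm_num)).2 (by nlinarith [mul_le_of_le_one_left (sq_nonneg (sin θ)) hm1.le]))
  have hb : (√(1 - m) + θ)⁻¹ ≤ (√(1 - m * (1 - sin θ ^ 2)))⁻¹ := by
    refine inv_anti₀ (sqrt_pos.2 (one_sub_mul_pos hm1 (by linarith) (sub_le_self _ (sq_nonneg _))))
      (sqrt_le_iff.2 ⟨by positivity, ?_⟩)
    nlinarith [sq_sqrt (show 0 ≤ 1 - m by linarith),
      mul_le_of_le_one_left (sq_nonneg (sin θ)) hm1.le,
      mul_nonneg (sqrt_nonneg (1 - m)) hθ0]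
  calc cos (2 * θ) * ellGap m (sin θ ^ 2)
      = (cos (2 * θ) * √(4 - 2 * m)) *
          ((√(1 - m * sin θ ^ 2))⁻¹ - (√(1 - m * (1 - sin θ ^ 2)))⁻¹) := by rw [ellGap]; ring
    _ ≤ 1 * ((√(1 - m * sin θ ^ 2))⁻¹ - (√(1 - m * (1 - sin θ ^ 2)))⁻¹) :=
      mul_le_mul_of_nonpos_right hcs hgap
    _ ≤ 2 - (√(1 - m) + θ)⁻¹ := by linarith

lemma orbitIntegral_le {m : ℝ} (hm0 : 0 ≤ m) (hm1 : m < 1) :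
    orbitIntegral m ≤ π / 4 - log (π / 8) + log √(1 - m) := by
  have hδ : 0 < √(1 - m) := sqrt_pos.2 (by linarith)
  have hπ := pi_pos
  have hint := (continuous_cos_two_mul_mul_ellGap hm1).intervalIntegrable (μ := volume)
  have hinv : IntervalIntegrable (fun θ => (√(1 - m) + θ)⁻¹) volume 0 (π / 8) :=
    (continuousOn_const.add continuousOn_id).inv₀ (fun θ hθ => by
      rw [uIcc_of_le (by positivity)] at hθ
      exact (add_pos_of_pos_of_nonneg hδ hθ.1).ne') |>.intervalIntegrable
  have hhead : ∫ θ in (0 : ℝ)..π / 8, cos (2 * θ) * ellGap m (sin θ ^ 2) ≤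
      ∫ θ in (0 : ℝ)..π / 8, (2 - (√(1 - m) + θ)⁻¹) :=
    integral_mono_on (by positivity) (hint _ _) (intervalIntegrable_const.sub hinv)
      fun θ hθ => cos_two_mul_mul_ellGap_le hm0 hm1 hθ.1 hθ.2
  have htail : ∫ θ in π / 8..π / 4, cos (2 * θ) * ellGap m (sin θ ^ 2) ≤ 0 := by
    simpa using integral_mono_on (by linarith) (hint _ _) intervalIntegrable_const
      fun θ hθ => mul_nonpos_of_nonneg_of_nonpos
        (cos_nonneg_of_mem_Icc ⟨by linarith [hθ.1], by linarith [hθ.2]⟩)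
        (ellGap_nonpos hm0 hm1 (sq_nonneg _) (sin_sq_le_half_of_cos_two_mul_nonneg
          (cos_nonneg_of_mem_Icc ⟨by linarith [hθ.1], by linarith [hθ.2]⟩)))
  have hlog : ∫ θ in (0 : ℝ)..π / 8, (√(1 - m) + θ)⁻¹ = log (√(1 - m) + π / 8) - log √(1 - m) := by
    rw [integral_comp_add_left (fun x => x⁻¹), add_zero, integral_inv_of_pos hδ (by positivity),
      log_div (by positivity) hδ.ne']
  have hmono : log (π / 8) ≤ log (√(1 - m) + π / 8) := log_le_log (by positivity) (by linarith)
  rw [orbitIntegral, ← integral_add_adjacent_intervals (hint 0 (π / 8)) (hint _ _)]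
  rw [integral_sub intervalIntegrable_const hinv, hlog, intervalIntegral.integral_const,
    smul_eq_mul] at hhead
  linarith

lemma tendsto_orbitIntegral_atBot : Tendsto orbitIntegral (𝓝[<] 1) atBot := by
  have hsqrt : Tendsto (fun m => √(1 - m)) (𝓝[<] 1) (𝓝[>] 0) := by
    refine tendsto_nhdsWithin_iff.2 ⟨?_, ?_⟩
    · exact ((continuous_const.sub continuous_id).sqrt.tendsto' (1 : ℝ) 0 (by simp)).mono_left
        nhdsWithin_le_nhds
    · filter_upwards [self_mem_nhdsWithin] with m hm using sqrt_pos.2 (sub_pos.2 hm)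
  refine tendsto_atBot_mono' _ ?_
    (tendsto_atBot_add_const_left _ (π / 4 - log (π / 8)) (tendsto_log_nhdsGT_zero.comp hsqrt))
  filter_upwards [Ioo_mem_nhdsLT (show (0 : ℝ) < 1 by norm_num)] with m hm
  exact orbitIntegral_le hm.1.le hm.2

theorem orbitlike_f_strictAnti_bij :
    StrictAntiOn
      (fun m => (2 * ellE m + (m - 2) * ellK m) * Real.sqrt (4 - 2 * m) / m)
      (Set.Ioo (0:ℝ) 1) ∧
    Set.BijOn
      (fun m => (2 * ellE m + (m - 2) * ellK m) * Real.sqrt (4 - 2 * m) / m)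
      (Set.Ioo (0:ℝ) 1) (Set.Iio (0:ℝ)) := by
  have heq : EqOn orbitIntegral (fun m => (2 * ellE m + (m - 2) * ellK m) * √(4 - 2 * m) / m)
      (Ioo 0 1) := fun m hm => (orbitIntegral_eq hm.1.ne' hm.2).symm
  have hanti : StrictAntiOn orbitIntegral (Ioo 0 1) :=
    strictAntiOn_orbitIntegral.mono Ioo_subset_Iio_self
  have hmaps : MapsTo orbitIntegral (Ioo 0 1) (Iio 0) := fun m hm => by
    simpa using strictAntiOn_orbitIntegral (show (0 : ℝ) ∈ Iio 1 by norm_num) hm.2 hm.1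
  have hsurj : SurjOn orbitIntegral (Ioo 0 1) (Iio 0) := by
    simpa using (continuousOn_orbitIntegral.mono Ico_subset_Iio_self)
      |>.surjOn_Ioo_Iio_of_tendsto_atBot zero_lt_one tendsto_orbitIntegral_atBot
  exact ⟨hanti.congr heq, BijOn.congr ⟨hmaps, hanti.injOn, hsurj⟩ heq⟩
end
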